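/- arXiv:0708.2087 — 3 statements merged into one kernel-verified Lean document; each statement's English description precedes it below -/
import Mathlib

section
/- For any lacunary sequence $\{t_j\}$ of positive reals with $t_1 \ge 2$ satisfying $t_{j+1}/t_j \ge 1 + 1/M$ for all $j$ (with $M \ge 8$), there exists a real number $\alpha$ such that $\|\alpha t_j\| \ge \frac{1}{2^{11} M \log M}$ for all $j \in \mathbb{N}$, where $\|x\|$ denotes the distance from $x$ to the nearest integer. -/
/-!
Peres–Schlag sieve. Put `ε = 1 / (2^11 M log M)` and `2^s ≈ 2^10 M log M`. At step `j` keep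
the dyadic intervals of length `2^-(n j)`, `2^(n j) ≈ 2^s t j`, that lie in the survivors of
step `j - 1` and on which `‖x t j‖ ≥ ε`. A discarded interval meets the `ε / t j`-neighbourhood
of some `a / t j` inside a survivor of step `j - g`, `g = ⌈M⌉ (s + 1)`. Such a survivor, of
length `2^-(n (j - g))`, sees at most `2 t j 2^-(n (j - g))` values of `a` (here
`t (j - g) ≤ 2^-(s+1) t j` is needed), and each `a` discards at most 3 intervals. So the
proportion discarded at step `j` is at most `12 · 2^-s` times the proportion surviving at step
`j - g`; as `12 g 2^-s ≤ 1/4`, no proportion vanishes, and the nested compact survivor sets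
share a point `α`.
-/

open Finset

namespace PeresSchlag

theorem card_Icc_ceil_floor_le {α : Type*} [Field α] [LinearOrder α] [IsStrictOrderedRing α]
    [FloorRing α] {lo hi : α} (h : lo ≤ hi + 1) :
    (#(Icc ⌈lo⌉ ⌊hi⌋) : α) ≤ hi - lo + 1 := by
  rcases le_or_gt ⌈lo⌉ (⌊hi⌋ + 1) with hle | hgt
  · have hcard := congrArg (Int.cast : ℤ → α) (Int.card_Icc_of_le _ _ hle)
    push_cast at hcard
    linarith [Int.floor_le hi, Int.le_ceil lo]
  · rw [Int.card_Icc, Int.toNat_of_nonpos (by omega), Nat.cast_zero]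
    linarith

def dyadicIcc (N : ℕ) (k : ℤ) : Set ℝ := Set.Icc (k / 2 ^ N) ((k + 1) / 2 ^ N)

theorem mem_dyadicIcc {N : ℕ} {k : ℤ} {x : ℝ} :
    x ∈ dyadicIcc N k ↔ k ≤ 2 ^ N * x ∧ 2 ^ N * x ≤ k + 1 := by
  rw [dyadicIcc, Set.mem_Icc, div_le_iff₀' (by positivity), le_div_iff₀' (by positivity)]

noncomputable def children (d : ℕ) (S : Finset ℤ) : Finset ℤ :=
  S.biUnion fun k => Ico (k * 2 ^ d) ((k + 1) * 2 ^ d)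

theorem card_children (d : ℕ) (S : Finset ℤ) : #(children d S) = #S * 2 ^ d := by
  rw [children, card_biUnion]
  · simp [Int.card_Ico, add_mul, Int.toNat_pow_of_nonneg]
  · have hdisj : ∀ {k k' : ℤ}, k < k' →
        Disjoint (Ico (k * 2 ^ d) ((k + 1) * 2 ^ d)) (Ico (k' * 2 ^ d) ((k' + 1) * 2 ^ d)) := by
      intro k k' hlt
      have : (k + 1) * 2 ^ d ≤ k' * 2 ^ d := by gcongr; omega
      exact disjoint_left.2 fun m hm hm' => by simp only [mem_Ico] at hm hm'; omega
    intro k _ k' _ hkk'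
    rcases hkk'.lt_or_gt with hlt | hgt
    · exact hdisj hlt
    · exact (hdisj hgt).symm

theorem dyadicIcc_subset_of_mem_Ico {N d : ℕ} {k m : ℤ}
    (hm : m ∈ Ico (k * 2 ^ d) ((k + 1) * 2 ^ d)) : dyadicIcc (N + d) m ⊆ dyadicIcc N k := by
  rw [mem_Ico] at hm
  have hlo : (k : ℝ) * 2 ^ d ≤ m := by exact_mod_cast hm.1
  have hhi : (m : ℝ) + 1 ≤ (k + 1) * 2 ^ d := by exact_mod_cast hm.2
  intro x hx
  rw [mem_dyadicIcc, pow_add] at hx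
  rw [mem_dyadicIcc]
  have h2d : (0 : ℝ) < 2 ^ d := by positivity
  constructor <;> nlinarith

def FarFromInt (T ε : ℝ) (I : Set ℝ) : Prop := ∀ x ∈ I, ∀ a : ℤ, ε ≤ |T * x - a|

theorem int_mem_Icc_of_mem_dyadicIcc {T ε x : ℝ} {P : ℕ} {k : ℤ} {a : ℤ} (hT : 0 ≤ T)
    (hx : x ∈ dyadicIcc P k) (ha : |T * x - a| < ε) :
    a ∈ Icc ⌈T * k / 2 ^ P - ε⌉ ⌊T * (k + 1) / 2 ^ P + ε⌋ := by
  rw [mem_dyadicIcc] at hx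
  rw [abs_sub_lt_iff] at ha
  have h2P : (0 : ℝ) < 2 ^ P := by positivity
  rw [Finset.mem_Icc, Int.ceil_le, Int.le_floor]
  constructor
  · rw [sub_le_iff_le_add, div_le_iff₀ h2P]
    nlinarith [mul_le_mul_of_nonneg_left hx.1 hT, mul_lt_mul_of_pos_left ha.1 h2P]
  · rw [← sub_le_iff_le_add, le_div_iff₀ h2P]
    nlinarith [mul_le_mul_of_nonneg_left hx.2 hT, mul_lt_mul_of_pos_left ha.2 h2P]

theorem index_mem_Icc_of_mem_dyadicIcc {T ε x : ℝ} {N : ℕ} {k : ℤ} {a : ℤ} (hT : 0 < T)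
    (hx : x ∈ dyadicIcc N k) (ha : |T * x - a| < ε) :
    k ∈ Icc ⌈2 ^ N / T * (a - ε) - 1⌉ ⌊2 ^ N / T * (a + ε)⌋ := by
  rw [mem_dyadicIcc] at hx
  rw [abs_sub_lt_iff] at ha
  have hc : 0 < 2 ^ N / T := by positivity
  have hx' : 2 ^ N * x = 2 ^ N / T * (T * x) := by field_simp
  rw [Finset.mem_Icc, Int.ceil_le, Int.le_floor]
  constructor
  · nlinarith [mul_lt_mul_of_pos_left ha.2 hc]
  · nlinarith [mul_lt_mul_of_pos_left ha.1 hc]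

open Classical in
theorem card_filter_not_farFromInt_le {T ε : ℝ} {N P : ℕ} (hT : 0 < T) (hε : 0 ≤ ε)
    (hεN : 2 * ε * 2 ^ N ≤ T) {R Q : Finset ℤ}
    (hRQ : ∀ k ∈ R, dyadicIcc N k ⊆ ⋃ k' ∈ Q, dyadicIcc P k') :
    (#{k ∈ R | ¬FarFromInt T ε (dyadicIcc N k)} : ℝ) ≤
      3 * (T / 2 ^ P + 2 * ε + 1) * #Q := by
  -- A discarded `k` is reached from some `k' ∈ Q` through an integer `a ∈ nearInts k'`.
  let nearInts : ℤ → Finset ℤ := fun k' =>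
    Icc ⌈T * k' / 2 ^ P - ε⌉ ⌊T * (k' + 1) / 2 ^ P + ε⌋
  let nearIdx : ℤ → Finset ℤ := fun a =>
    Icc ⌈2 ^ N / T * (a - ε) - 1⌉ ⌊2 ^ N / T * (a + ε)⌋
  have hsub : {k ∈ R | ¬FarFromInt T ε (dyadicIcc N k)} ⊆
      Q.biUnion fun k' => (nearInts k').biUnion nearIdx := by
    intro k hk
    simp only [mem_filter, FarFromInt, not_forall, not_le] at hk
    obtain ⟨hkR, x, hxk, a, hxa⟩ := hk
    obtain ⟨k', hk'Q, hxk'⟩ : ∃ k' ∈ Q, x ∈ dyadicIcc P k' := by simpa using hRQ k hkR hxk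
    exact mem_biUnion.2 ⟨k', hk'Q, mem_biUnion.2
      ⟨a, int_mem_Icc_of_mem_dyadicIcc hT.le hxk' hxa, index_mem_Icc_of_mem_dyadicIcc hT hxk hxa⟩⟩
  have hnearInts : ∀ k', (#(nearInts k') : ℝ) ≤ T / 2 ^ P + 2 * ε + 1 := fun k' => by
    refine (card_Icc_ceil_floor_le ?_).trans_eq (by ring)
    have : T * k' / 2 ^ P ≤ T * (k' + 1) / 2 ^ P := by gcongr; linarith
    linarith
  have hnearIdx : ∀ a, #(nearIdx a) ≤ 3 := fun a => by
    have h2ε : 2 * ε * (2 ^ N / T) ≤ 1 := by rw [mul_div_assoc', div_le_one hT]; exact hεN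
    have : (#(nearIdx a) : ℝ) ≤ 3 :=
      (card_Icc_ceil_floor_le (by nlinarith [show 0 < 2 ^ N / T by positivity])).trans
        (by linarith)
    exact_mod_cast this
  have hcard :
      #{k ∈ R | ¬FarFromInt T ε (dyadicIcc N k)} ≤ ∑ k' ∈ Q, #(nearInts k') * 3 :=
    (card_le_card hsub).trans <| card_biUnion_le.trans <|
      sum_le_sum fun k' _ => card_biUnion_le_card_mul _ _ _ fun a _ => hnearIdx a
  calc (#{k ∈ R | ¬FarFromInt T ε (dyadicIcc N k)} : ℝ)
      ≤ ∑ k' ∈ Q, (#(nearInts k') : ℝ) * 3 := by exact_mod_cast hcard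
    _ ≤ ∑ k' ∈ Q, (T / 2 ^ P + 2 * ε + 1) * 3 := by gcongr with k'; exact hnearInts k'
    _ = 3 * (T / 2 ^ P + 2 * ε + 1) * #Q := by rw [sum_const, nsmul_eq_mul]; ring

section Recursion

variable {μ : ℕ → ℝ} {g : ℕ} {θ : ℝ}

theorem sub_mul_le_add_of_sub_mul_le_succ (hμ : Antitone μ) (hθ : 0 ≤ θ)
    (hrec : ∀ j, μ j - θ * μ (j + 1 - g) ≤ μ (j + 1)) (i b : ℕ) :
    μ i - b * θ * μ (i + 1 - g) ≤ μ (i + b) := by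
  induction b with
  | zero => simp
  | succ b ih =>
    have hlag : θ * μ (i + b + 1 - g) ≤ θ * μ (i + 1 - g) :=
      mul_le_mul_of_nonneg_left (hμ (by omega)) hθ
    rw [← add_assoc]
    push_cast
    linarith [hrec (i + b)]

theorem pos_of_sub_mul_le_succ (hμ : Antitone μ) (h0 : 0 < μ 0) (hg : 0 < g) (hθ : 0 ≤ θ)
    (hgθ : g * θ ≤ 1 / 4) (hrec : ∀ j, μ j - θ * μ (j + 1 - g) ≤ μ (j + 1)) :
    ∀ j, 0 < μ j := by
  have tele := sub_mul_le_add_of_sub_mul_le_succ hμ hθ hrec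
  -- Each lag-block of `g` steps loses at most half of the mass.
  suffices h : ∀ j, 0 < μ j ∧ μ (j - g) ≤ 2 * μ j from fun j => (h j).1
  intro j
  induction j using Nat.strong_induction_on with
  | _ j ih =>
    rcases lt_or_ge j g with hjg | hjg
    · have hjθ : (j : ℝ) * θ ≤ g * θ := by gcongr
      have h := tele 0 j
      rw [show 0 + 1 - g = 0 by omega, zero_add] at h
      rw [show j - g = 0 by omega]
      constructor <;> nlinarith
    · obtain ⟨hpos, hhalf⟩ := ih (j - g) (by omega)
      have h := tele (j - g) g
      rw [show j - g + g = j by omega] at h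
      have hlag : μ (j - g + 1 - g) ≤ 2 * μ (j - g) := (hμ (by omega)).trans hhalf
      have : (g : ℝ) * θ * μ (j - g + 1 - g) ≤ g * θ * (2 * μ (j - g)) := by gcongr
      constructor <;> nlinarith

end Recursion

section Sieve

variable (t : ℕ → ℝ) (ε : ℝ) (n : ℕ → ℕ)

open Classical

noncomputable def survivors : ℕ → Finset ℤ
  | 0 => {0}
  | j + 1 => {k ∈ children (n (j + 1) - n j) (survivors j) |
      FarFromInt (t (j + 1)) ε (dyadicIcc (n (j + 1)) k)}

def survivorSet (j : ℕ) : Set ℝ := ⋃ k ∈ survivors t ε n j, dyadicIcc (n j) k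

noncomputable def density (j : ℕ) : ℝ := #(survivors t ε n j) / 2 ^ n j

variable {t ε n}

theorem dyadicIcc_subset_survivorSet (hn : Monotone n) {j : ℕ} {k : ℤ}
    (hk : k ∈ children (n (j + 1) - n j) (survivors t ε n j)) :
    dyadicIcc (n (j + 1)) k ⊆ survivorSet t ε n j := by
  obtain ⟨k', hk', hk⟩ := mem_biUnion.1 hk
  have hN : n (j + 1) = n j + (n (j + 1) - n j) := by
    have : n j ≤ n (j + 1) := hn (by omega)
    omega
  rw [hN]
  exact (dyadicIcc_subset_of_mem_Ico hk).trans
    (Set.subset_biUnion_of_mem (u := fun k => dyadicIcc (n j) k) hk')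

theorem survivorSet_succ_subset (hn : Monotone n) (j : ℕ) :
    survivorSet t ε n (j + 1) ⊆ survivorSet t ε n j :=
  Set.iUnion₂_subset fun _ hk => dyadicIcc_subset_survivorSet hn (mem_filter.1 hk).1

theorem survivorSet_antitone (hn : Monotone n) : Antitone (survivorSet t ε n) :=
  antitone_nat_of_succ_le (survivorSet_succ_subset hn)

theorem farFromInt_survivorSet_succ (j : ℕ) :
    FarFromInt (t (j + 1)) ε (survivorSet t ε n (j + 1)) := by
  intro x hx
  obtain ⟨k, hk, hxk⟩ := Set.mem_iUnion₂.1 hx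
  exact (mem_filter.1 hk).2 x hxk

theorem isCompact_survivorSet (j : ℕ) : IsCompact (survivorSet t ε n j) :=
  (survivors t ε n j).finite_toSet.isCompact_biUnion fun _ _ => isCompact_Icc

theorem isClosed_survivorSet (j : ℕ) : IsClosed (survivorSet t ε n j) :=
  (survivors t ε n j).finite_toSet.isClosed_biUnion fun _ _ => isClosed_Icc

theorem survivorSet_nonempty_of_density_pos {j : ℕ} (h : 0 < density t ε n j) :
    (survivorSet t ε n j).Nonempty := by
  obtain ⟨k, hk⟩ : (survivors t ε n j).Nonempty := by
    rw [← card_pos]; exact_mod_cast pos_of_mul_pos_left h (by positivity)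
  exact ⟨_, Set.mem_biUnion hk (Set.left_mem_Icc.2 (by gcongr; linarith))⟩

theorem density_eq_card_mul_div (hn : Monotone n) (j : ℕ) :
    density t ε n j =
      #(survivors t ε n j) * 2 ^ (n (j + 1) - n j) / 2 ^ n (j + 1) := by
  have : n j ≤ n (j + 1) := hn (by omega)
  rw [density, ← Nat.add_sub_cancel' this, pow_add, Nat.add_sub_cancel_left, mul_div_mul_right]
  positivity

theorem density_antitone (hn : Monotone n) : Antitone (density t ε n) := by
  refine antitone_nat_of_succ_le fun j => ?_
  rw [density_eq_card_mul_div hn j, density]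
  gcongr
  exact_mod_cast (card_filter_le _ _).trans (card_children _ _).le

theorem density_sub_le_density_succ (hn : Monotone n) (hε : 0 ≤ ε) (hε1 : 2 * ε ≤ 1)
    {g j : ℕ} (hg : 0 < g) (hεN : 2 * ε * 2 ^ n (j + 1) ≤ t (j + 1))
    (hlag : 2 * 2 ^ n (j + 1 - g) ≤ t (j + 1)) :
    density t ε n j - 6 * t (j + 1) / 2 ^ n (j + 1) * density t ε n (j + 1 - g) ≤
      density t ε n (j + 1) := by
  set T := t (j + 1)
  set S := survivors t ε n
  set P := n (j + 1 - g)
  have hT : 0 < T := lt_of_lt_of_le (by positivity) hlag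
  set killed := {k ∈ children (n (j + 1) - n j) (S j) |
    ¬FarFromInt T ε (dyadicIcc (n (j + 1)) k)}
  have hsplit : (#(S (j + 1)) : ℝ) + #killed = #(S j) * 2 ^ (n (j + 1) - n j) := by
    exact_mod_cast (card_filter_add_card_filter_not _).trans (card_children _ _)
  have hkilled : (#killed : ℝ) ≤ 3 * (T / 2 ^ P + 2 * ε + 1) * #(S (j + 1 - g)) :=
    card_filter_not_farFromInt_le hT hε hεN fun k hk =>
      (dyadicIcc_subset_survivorSet hn hk).trans (survivorSet_antitone hn (by omega))
  have hP : 3 * (T / 2 ^ P + 2 * ε + 1) ≤ 6 * T / 2 ^ P := by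
    have : 2 ≤ T / 2 ^ P := by rw [le_div_iff₀ (by positivity)]; linarith
    rw [mul_div_assoc]; linarith
  have key : (#(S j) : ℝ) * 2 ^ (n (j + 1) - n j) - 6 * T / 2 ^ P * #(S (j + 1 - g)) ≤
      #(S (j + 1)) := by
    nlinarith [mul_le_mul_of_nonneg_right hP (Nat.cast_nonneg (α := ℝ) #(S (j + 1 - g)))]
  calc density t ε n j - 6 * T / 2 ^ n (j + 1) * density t ε n (j + 1 - g)
      = ((#(S j) : ℝ) * 2 ^ (n (j + 1) - n j) - 6 * T / 2 ^ P * #(S (j + 1 - g))) /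
          2 ^ n (j + 1) := by
        rw [density_eq_card_mul_div hn j, density]; ring
    _ ≤ density t ε n (j + 1) := by rw [density]; gcongr

theorem exists_forall_farFromInt (hn : Monotone n) (hε : 0 ≤ ε) (hε1 : 2 * ε ≤ 1) {g : ℕ}
    {θ : ℝ} (hg : 0 < g) (hgθ : g * θ ≤ 1 / 4)
    (hεN : ∀ j, 2 * ε * 2 ^ n (j + 1) ≤ t (j + 1))
    (hlag : ∀ j, 2 * 2 ^ n (j + 1 - g) ≤ t (j + 1))
    (hθ : ∀ j, 6 * t (j + 1) / 2 ^ n (j + 1) ≤ θ) :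
    ∃ α : ℝ, ∀ j, FarFromInt (t (j + 1)) ε {α} := by
  have ht1 : 0 < t 1 := lt_of_lt_of_le (by positivity) (hlag 0)
  have hθ0 : 0 ≤ θ := (div_nonneg (by linarith) (by positivity)).trans (hθ 0)
  have hdensity : ∀ j, 0 < density t ε n j := by
    refine pos_of_sub_mul_le_succ (density_antitone hn) (by simp [density, survivors]) hg hθ0 hgθ
      fun j => ?_
    have hstep := density_sub_le_density_succ hn hε hε1 hg (hεN j) (hlag j)
    have hd : 0 ≤ density t ε n (j + 1 - g) := by unfold density; positivity
    nlinarith [mul_le_mul_of_nonneg_right (hθ j) hd]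
  obtain ⟨α, hα⟩ := IsCompact.nonempty_iInter_of_sequence_nonempty_isCompact_isClosed _
    (survivorSet_succ_subset hn) (fun j => survivorSet_nonempty_of_density_pos (hdensity j))
    (isCompact_survivorSet 0) isClosed_survivorSet
  exact ⟨α, fun j x hx =>
    hx ▸ farFromInt_survivorSet_succ j α (Set.mem_iInter.1 hα (j + 1))⟩

end Sieve

section Lacunary

variable {M : ℝ} {t : ℕ → ℝ}

theorem one_add_inv_pow_mul_le (hM : 0 < M) (hpos : ∀ j, 1 ≤ j → 0 < t j)
    (hlac : ∀ j, 1 ≤ j → 1 + 1 / M ≤ t (j + 1) / t j) {i : ℕ} (hi : 1 ≤ i) (m : ℕ) :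
    (1 + 1 / M) ^ m * t i ≤ t (i + m) := by
  induction m with
  | zero => simp
  | succ m ih =>
    have hstep := hlac (i + m) (by omega)
    rw [le_div_iff₀ (hpos _ (by omega))] at hstep
    calc (1 + 1 / M) ^ (m + 1) * t i = (1 + 1 / M) * ((1 + 1 / M) ^ m * t i) := by ring
      _ ≤ (1 + 1 / M) * t (i + m) := by gcongr
      _ ≤ t (i + (m + 1)) := hstep

theorem two_le_one_add_inv_pow_ceil (hM : 0 < M) : 2 ≤ (1 + 1 / M) ^ ⌈M⌉₊ := by
  have hbern := one_add_mul_le_pow (a := 1 / M) (by linarith [one_div_pos.2 hM]) ⌈M⌉₊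
  have : 1 ≤ (⌈M⌉₊ : ℝ) * (1 / M) := by
    rw [mul_one_div, le_div_iff₀ hM, one_mul]; exact Nat.le_ceil M
  linarith

theorem two_pow_mul_le_of_lacunary (hM : 0 < M) (hpos : ∀ j, 1 ≤ j → 0 < t j)
    (hlac : ∀ j, 1 ≤ j → 1 + 1 / M ≤ t (j + 1) / t j) {i : ℕ} (hi : 1 ≤ i) (m : ℕ) :
    2 ^ m * t i ≤ t (i + ⌈M⌉₊ * m) :=
  calc 2 ^ m * t i ≤ (1 + 1 / M) ^ (⌈M⌉₊ * m) * t i := by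
        rw [pow_mul]; gcongr; exacts [(hpos i hi).le, two_le_one_add_inv_pow_ceil hM]
    _ ≤ t (i + ⌈M⌉₊ * m) := one_add_inv_pow_mul_le hM hpos hlac hi _

theorem le_of_lacunary (hM : 0 < M) (hpos : ∀ j, 1 ≤ j → 0 < t j)
    (hlac : ∀ j, 1 ≤ j → 1 + 1 / M ≤ t (j + 1) / t j) {i j : ℕ} (hi : 1 ≤ i)
    (hij : i ≤ j) : t i ≤ t j := by
  obtain ⟨m, rfl⟩ := Nat.exists_eq_add_of_le hij
  refine le_trans ?_ (one_add_inv_pow_mul_le hM hpos hlac hi m)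
  exact le_mul_of_one_le_left (hpos i hi).le (one_le_pow₀ (by simp [hM.le]))

theorem exists_monotone_two_pow_le_lt {u : ℕ → ℝ} (hu : Monotone u) (h1 : ∀ j, 1 ≤ u j) :
    ∃ l : ℕ → ℕ, Monotone l ∧ ∀ j, 2 ^ l j ≤ u j ∧ u j < 2 ^ (l j + 1) := by
  choose l hl using fun j => exists_nat_pow_near (h1 j) one_lt_two
  refine ⟨l, fun i j hij => ?_, hl⟩
  have : (2 : ℝ) ^ l i < 2 ^ (l j + 1) := (hl i).1.trans_lt ((hu hij).trans_lt (hl j).2)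
  exact Nat.lt_succ_iff.1 ((pow_lt_pow_iff_right₀ one_lt_two).1 this)

theorem exists_forall_le_abs_sub_of_lacunary (hM : 0 < M) (hpos : ∀ j, 1 ≤ j → 0 < t j)
    (ht1 : 2 ≤ t 1) (hlac : ∀ j, 1 ≤ j → 1 + 1 / M ≤ t (j + 1) / t j) {ε : ℝ} {s : ℕ}
    (hε : 0 ≤ ε) (hεs : 2 * ε * 2 ^ s ≤ 1)
    (hs : 48 * ⌈M⌉₊ * (s + 1) ≤ (2 : ℝ) ^ s) :
    ∃ α : ℝ, ∀ j, 1 ≤ j → ∀ a : ℤ, ε ≤ |α * t j - a| := by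
  suffices h : ∃ α : ℝ, ∀ j, FarFromInt (t (j + 1)) ε {α} by
    obtain ⟨α, hα⟩ := h
    refine ⟨α, fun j hj a => ?_⟩
    obtain ⟨i, rfl⟩ := Nat.exists_eq_add_of_le' hj
    rw [mul_comm]
    exact hα i α rfl a
  have ht : ∀ j, 2 ≤ t (j + 1) := fun j =>
    ht1.trans (le_of_lacunary hM hpos hlac le_rfl (by omega))
  obtain ⟨l, hl_mono, hl⟩ := exists_monotone_two_pow_le_lt (u := fun j => t (j + 1))
    (fun i j hij => le_of_lacunary hM hpos hlac (by omega) (by omega))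
    (fun j => one_le_two.trans (ht j))
  -- Step `j + 1` of the sieve uses intervals of length `2 ^ -(l j + s) ≈ 2 ^ -s / t (j + 1)`.
  let n : ℕ → ℕ := fun | 0 => 0 | j + 1 => l j + s
  have hn : Monotone n :=
    monotone_nat_of_le_succ fun | 0 => Nat.zero_le _ | j + 1 => by simpa [n] using hl_mono j.le_succ
  have h2s : (0 : ℝ) < 2 ^ s := by positivity
  refine exists_forall_farFromInt (n := n) (g := ⌈M⌉₊ * (s + 1)) (θ := 12 / 2 ^ s) hn hε ?_
    (Nat.mul_pos (Nat.ceil_pos.2 hM) s.succ_pos) ?_ (fun j => ?_) (fun j => ?_) (fun j => ?_)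
  · nlinarith [one_le_pow₀ (M₀ := ℝ) (n := s) one_le_two]
  · push_cast
    rw [mul_div_assoc', div_le_iff₀ h2s]
    linarith
  · show 2 * ε * 2 ^ (l j + s) ≤ t (j + 1)
    rw [pow_add]
    nlinarith [(hl j).1, show (0 : ℝ) < 2 ^ l j by positivity]
  · rcases Nat.lt_or_ge j (⌈M⌉₊ * (s + 1)) with hj | hj
    · rw [show j + 1 - ⌈M⌉₊ * (s + 1) = 0 by omega]
      simpa [n] using ht j
    · obtain ⟨p, rfl⟩ := Nat.exists_eq_add_of_le hj
      rw [show ⌈M⌉₊ * (s + 1) + p + 1 - ⌈M⌉₊ * (s + 1) = p + 1 by omega]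
      calc 2 * 2 ^ n (p + 1) = 2 ^ (s + 1) * 2 ^ l p := by simp only [n]; ring
        _ ≤ 2 ^ (s + 1) * t (p + 1) := by gcongr; exact (hl p).1
        _ ≤ t (p + 1 + ⌈M⌉₊ * (s + 1)) :=
            two_pow_mul_le_of_lacunary hM hpos hlac (by omega) _
        _ = t (⌈M⌉₊ * (s + 1) + p + 1) := by ring_nf
  · show 6 * t (j + 1) / 2 ^ (l j + s) ≤ 12 / 2 ^ s
    have := (hl j).2
    rw [pow_succ] at this
    rw [pow_add, div_le_div_iff₀ (by positivity) h2s]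
    nlinarith [mul_lt_mul_of_pos_right this h2s]

end Lacunary

open Real in
theorem two_le_log_of_eight_le {M : ℝ} (hM : 8 ≤ M) : 2 ≤ log M := by
  have h8 : log 8 = 3 * log 2 := by
    rw [show (8 : ℝ) = 2 ^ 3 by norm_num, log_pow]; norm_num
  linarith [log_le_log (by norm_num) hM, log_two_gt_d9]

open Real in
theorem forty_eight_mul_ceil_mul_succ_le {M : ℝ} (hM : 8 ≤ M) {s : ℕ}
    (hs : (2 : ℝ) ^ s ≤ 2 ^ 10 * M * log M) (hs' : 2 ^ 10 * M * log M < 2 ^ (s + 1)) :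
    48 * ⌈M⌉₊ * (s + 1) ≤ (2 : ℝ) ^ s := by
  have hL := two_le_log_of_eight_le hM
  have hslog : s * log 2 ≤ 10 * log 2 + log M + log (log M) := by
    have := log_le_log (by positivity) hs
    rwa [log_pow, log_mul (by positivity) (by positivity), log_mul (by positivity) (by positivity),
      log_pow] at this
  have hlogL : log (log M) ≤ log M - 1 := log_le_sub_one_of_pos (by positivity)
  have hlog2 : 2 / 3 < log 2 := by linarith [log_two_gt_d9]
  have hs1 : (s : ℝ) + 1 ≤ 19 / 2 + 3 * log M := by
    rcases le_or_gt (s : ℝ) 10 with h | h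
    · linarith
    · nlinarith
  have hceil : (⌈M⌉₊ : ℝ) ≤ M + 1 := (Nat.ceil_lt_add_one (by linarith)).le
  have h2s : 2 ^ 9 * M * log M < 2 ^ s := by rw [pow_succ _ s] at hs'; linarith
  calc 48 * (⌈M⌉₊ : ℝ) * (s + 1) ≤ 48 * (M + 1) * (19 / 2 + 3 * log M) := by gcongr
    _ ≤ 2 ^ 9 * M * log M := by nlinarith
    _ ≤ 2 ^ s := h2s.le

end PeresSchlag

open PeresSchlag

/-- Peres–Schlag theorem (one-dimensional): for a lacunary sequence `t` with
`t 1 ≥ 2` and ratio at least `1 + 1/M` (`M ≥ 8`), there is a real `α` whose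
multiples `α * t j` stay at distance at least `1/(2^11 * M * log M)` from the
integers. -/
theorem peres_schlag_one_dim (M : ℝ) (hM : 8 ≤ M) (t : ℕ → ℝ)
    (hpos : ∀ j, 1 ≤ j → 0 < t j) (ht1 : 2 ≤ t 1)
    (hlac : ∀ j, 1 ≤ j → 1 + 1 / M ≤ t (j + 1) / t j) :
    ∃ α : ℝ, ∀ j, 1 ≤ j → ∀ a : ℤ,
      1 / (2 ^ 11 * M * Real.log M) ≤ |α * t j - (a : ℝ)| := by
  have hL := two_le_log_of_eight_le hM
  obtain ⟨s, hs, hs'⟩ :=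
    exists_nat_pow_near (x := 2 ^ 10 * M * Real.log M) (by nlinarith) one_lt_two
  refine exists_forall_le_abs_sub_of_lacunary (by linarith) hpos ht1 hlac (by positivity) ?_
    (forty_eight_mul_ceil_mul_succ_le hM hs hs')
  rw [mul_one_div, div_mul_eq_mul_div, div_le_one (by positivity)]
  linarith
end

section
/- (Principal Lemma) Let $d \ge 1$, $M \ge 8$, $t_1 \ge 2$, $\{t_j\}$ with $t_{j+1}/t_j \ge 1 + 1/M$, and set $\delta = \frac{1}{2^{11}(M\log M)^{1/d}}$, $\delta_1 = 2^{4d+1}\delta^d$, $h = \lceil 2^{3d} M \log M \rceil$, $l_j = \lfloor \log_2(t_j/(2\delta)) \rfloor$. Let $A_j \subseteq [0,1]^d$ be the union of the open dyadic boxes at scale $2^{-l_j}$ (with side lengths $2^{-l_j}$ or $2^{1-l_j}$) covering $\bigcup_{0 \le a_1,\dots,a_d \le \lceil t_j \rceil} E(j,{\bf a}) \cap [0,1]^d$, where $E(j,{\bf a}) = \prod_k \{x \in [0,1] : |x - a_k/t_j| \le \delta/t_j\}$. If $\mu\left(\bigcap_{j \le i} A_j^c\right) \ne 0$, then $\mu\left(A_{i+h}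 \cap \bigcap_{j \le i} A_j^c\right) \le \delta_1 \, \mu\left(\bigcap_{j \le i} A_j^c\right)$. -/
/-!
Put `N = 2 ^ l i`. For `j ≤ i` we have `l j ≤ l i`, so `A j` is a union of boxes with endpoints
in `ℤ / N` and every open grid cell of side `1 / N` either lies in `A j` or misses it. Up to the
null union of the cell boundaries, `C i` is therefore a union of grid cells, and it suffices to
bound the proportion of a single cell covered by `A (i + h)`. Coordinatewise, `A (i + h)` lies in
a union of intervals of length `4 / 2 ^ l (i + h) ≤ 16 δ / t (i + h)`, one near each point of
`ℤ / t (i + h)`, and at most `t (i + h) / N + 2` of them meet a grid interval. Lacunarity over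
`h` steps gives `t (i + h) / N ≥ 4 d`, so the error factor `(1 + 2 N / t (i + h)) ^ d` is at most
`2`, and the proportion is at most `2 (16 δ) ^ d = δ₁`.
-/

open MeasureTheory Set

lemma pow_mul_le_of_ratio_le {t : ℕ → ℝ} {r : ℝ} (hr : 0 ≤ r) (hpos : ∀ j, 1 ≤ j → 0 < t j)
    (hratio : ∀ j, 1 ≤ j → r ≤ t (j + 1) / t j) {j : ℕ} (hj : 1 ≤ j) (n : ℕ) :
    r ^ n * t j ≤ t (j + n) := by
  induction n with
  | zero => simp
  | succ n ih =>
    have hstep : r * t (j + n) ≤ t (j + n + 1) :=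
      (le_div_iff₀ (hpos _ (by omega))).mp (hratio _ (by omega))
    calc r ^ (n + 1) * t j = r * (r ^ n * t j) := by ring
      _ ≤ r * t (j + n) := by gcongr
      _ ≤ t (j + (n + 1)) := hstep

lemma monotoneOn_of_one_le_ratio {t : ℕ → ℝ} {r : ℝ} (hr : 1 ≤ r) (hpos : ∀ j, 1 ≤ j → 0 < t j)
    (hratio : ∀ j, 1 ≤ j → r ≤ t (j + 1) / t j) : MonotoneOn t (Ici 1) := by
  intro j hj k _ hjk
  obtain ⟨n, rfl⟩ := Nat.exists_eq_add_of_le hjk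
  exact (le_mul_of_one_le_left (hpos j hj).le (one_le_pow₀ hr)).trans
    (pow_mul_le_of_ratio_le (by linarith) hpos hratio hj n)

lemma mem_Icc_mul_zpow_floor_logb {T δ : ℝ} (hT : 0 < T) (hδ : 0 < δ) :
    T ∈ Icc (2 * δ * 2 ^ ⌊Real.logb 2 (T / (2 * δ))⌋)
      (4 * δ * 2 ^ ⌊Real.logb 2 (T / (2 * δ))⌋) := by
  have hx : 0 < T / (2 * δ) := by positivity
  have hlog := Real.floor_logb_natCast (b := 2) hx.le
  push_cast at hlog
  rw [hlog]
  constructor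
  · rw [← le_div_iff₀' (by positivity)]
    exact_mod_cast Int.zpow_log_le_self (b := 2) one_lt_two hx
  · have := Int.lt_zpow_succ_log_self (R := ℝ) (b := 2) one_lt_two (T / (2 * δ))
    rw [show (4 : ℝ) * δ = 2 * δ * 2 by ring, mul_assoc, ← div_le_iff₀' (by positivity),
      ← zpow_one_add₀ (two_ne_zero : (2 : ℝ) ≠ 0), add_comm]
    exact_mod_cast this.le

lemma zpow_floor_logb_eq_natCast_and_dvd {x y : ℝ} (hx : 1 ≤ x) (hxy : x ≤ y) :
    (2 : ℝ) ^ ⌊Real.logb 2 x⌋ = ((2 ^ ⌊Real.logb 2 x⌋.toNat : ℕ) : ℝ) ∧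
      2 ^ ⌊Real.logb 2 x⌋.toNat ∣ 2 ^ ⌊Real.logb 2 y⌋.toNat := by
  have hnonneg : 0 ≤ ⌊Real.logb 2 x⌋ := Int.floor_nonneg.mpr (Real.logb_nonneg one_lt_two hx)
  have hmono : ⌊Real.logb 2 x⌋ ≤ ⌊Real.logb 2 y⌋ :=
    Int.floor_le_floor (Real.logb_le_logb_of_le one_lt_two (by linarith) hxy)
  refine ⟨?_, pow_dvd_pow 2 (Int.toNat_le_toNat hmono)⟩
  push_cast
  rw [← zpow_natCast, Int.toNat_of_nonneg hnonneg]

lemma one_le_mul_log_self {M : ℝ} (hM : Real.exp 1 ≤ M) : 1 ≤ M * Real.log M := by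
  have h1 : 1 ≤ Real.log M := by rwa [Real.le_log_iff_exp_le ((Real.exp_pos 1).trans_le hM)]
  nlinarith [Real.add_one_le_exp 1]

lemma le_log_one_add_inv {M : ℝ} (hM : 0 < M) : 1 / (M + 1) ≤ Real.log (1 + 1 / M) := by
  have := Real.one_sub_inv_le_log_of_pos (x := 1 + 1 / M) (by positivity)
  have e : 1 - (1 + 1 / M)⁻¹ = 1 / (M + 1) := by field_simp; ring
  linarith

lemma pow_add_six_le_one_add_inv_pow {d : ℕ} (hd : 1 ≤ d) {M : ℝ} (hM : 8 ≤ M) {h : ℕ}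
    (hh : 8 ^ d * M * Real.log M ≤ h) : M ^ (d + 6) ≤ (1 + 1 / M) ^ h := by
  have hM0 : 0 < M := by linarith
  have hlogM : 0 < Real.log M := Real.log_pos (by linarith)
  have h8d : (1 : ℝ) + d * 7 ≤ 8 ^ d := by
    have := one_add_mul_le_pow (a := (7 : ℝ)) (by norm_num) d
    norm_num at this ⊢; linarith
  have hd' : (1 : ℝ) ≤ d := by exact_mod_cast hd
  rw [← Real.log_le_log_iff (by positivity) (by positivity), Real.log_pow, Real.log_pow]
  calc ((d + 6 : ℕ) : ℝ) * Real.log M ≤ 8 ^ d * M * Real.log M / (M + 1) := by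
        rw [le_div_iff₀ (by positivity)]
        have : ((d : ℝ) + 6) * (M + 1) ≤ 8 ^ d * M := by nlinarith
        push_cast; nlinarith
    _ ≤ h * (1 / (M + 1)) := by rw [mul_one_div]; gcongr
    _ ≤ h * Real.log (1 + 1 / M) := by gcongr; exact le_log_one_add_inv hM0

lemma two_mul_le_div_mul_one_add_inv_pow {d : ℕ} (hd : 1 ≤ d) {M : ℝ} (hM : 8 ≤ M) {h : ℕ}
    (hh : 2 ^ (3 * d) * M * Real.log M ≤ h) :
    2 * d ≤ 1 / (2 ^ 11 * (M * Real.log M) ^ ((1 : ℝ) / d)) * (1 + 1 / M) ^ h := by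
  have hM0 : 0 < M := by linarith
  have hMlogM : 1 ≤ M * Real.log M := one_le_mul_log_self (by linarith [Real.exp_one_lt_d9])
  have hroot : (M * Real.log M) ^ ((1 : ℝ) / d) ≤ M ^ 2 := by
    calc (M * Real.log M) ^ ((1 : ℝ) / d) ≤ (M * Real.log M) ^ (1 : ℝ) := by
          apply Real.rpow_le_rpow_of_exponent_le hMlogM
          rw [div_le_one (by positivity)]; exact_mod_cast hd
      _ ≤ M ^ 2 := by
          rw [Real.rpow_one, sq]
          gcongr
          exact (Real.log_le_sub_one_of_pos hM0).trans (by linarith)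
  have hgrow : M ^ (d + 6) ≤ (1 + 1 / M) ^ h := by
    apply pow_add_six_le_one_add_inv_pow hd hM
    rwa [show (8 : ℝ) ^ d = 2 ^ (3 * d) by rw [pow_mul]; norm_num]
  have hd2 : (d : ℝ) ≤ M ^ d := by
    calc (d : ℝ) ≤ 2 ^ d := by exact_mod_cast Nat.lt_two_pow_self.le
      _ ≤ M ^ d := by gcongr; linarith
  have h4096 : (2 : ℝ) ^ 12 ≤ M ^ 4 := by
    calc (2 : ℝ) ^ 12 = 8 ^ 4 := by norm_num
      _ ≤ M ^ 4 := by gcongr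
  rw [div_mul_eq_mul_div, one_mul, le_div_iff₀ (by positivity)]
  calc 2 * d * (2 ^ 11 * (M * Real.log M) ^ ((1 : ℝ) / d)) ≤ 2 ^ 12 * d * M ^ 2 := by
        have : 0 ≤ (d : ℝ) := by positivity
        nlinarith
    _ ≤ M ^ 4 * M ^ d * M ^ 2 := by gcongr
    _ = M ^ (d + 6) := by ring
    _ ≤ (1 + 1 / M) ^ h := hgrow

lemma four_mul_le_div_of_ratio_le {d : ℕ} (hd : 1 ≤ d) {M : ℝ} (hM : 8 ≤ M) {t : ℕ → ℝ}
    (hpos : ∀ j, 1 ≤ j → 0 < t j) (hlac : ∀ j, 1 ≤ j → 1 + 1 / M ≤ t (j + 1) / t j)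
    {δ : ℝ} (hδ : δ = 1 / (2 ^ 11 * (M * Real.log M) ^ ((1 : ℝ) / d))) {h : ℕ}
    (hh : 2 ^ (3 * d) * M * Real.log M ≤ h) {i : ℕ} (hi : 1 ≤ i) {N : ℝ} (hN : 0 < N)
    (hNt : 2 * δ * N ≤ t i) : 4 * d ≤ t (i + h) / N := by
  have hM0 : 0 < M := by linarith
  rw [le_div_iff₀ hN]
  calc 4 * d * N = 2 * d * (2 * N) := by ring
    _ ≤ δ * (1 + 1 / M) ^ h * (2 * N) := by
        refine mul_le_mul_of_nonneg_right ?_ (by positivity)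
        rw [hδ]; exact two_mul_le_div_mul_one_add_inv_pow hd hM hh
    _ = (1 + 1 / M) ^ h * (2 * δ * N) := by ring
    _ ≤ (1 + 1 / M) ^ h * t i := by gcongr
    _ ≤ t (i + h) := pow_mul_le_of_ratio_le (by positivity) hpos hlac hi h

lemma one_div_two_pow_mul_rpow_mem_Ioc {M : ℝ} (hM : 8 ≤ M) {r : ℝ} (hr : 0 ≤ r) :
    1 / (2 ^ 11 * (M * Real.log M) ^ r) ∈ Ioc 0 (1 / 20) := by
  have hroot : 1 ≤ (M * Real.log M) ^ r :=
    Real.one_le_rpow (one_le_mul_log_self (by linarith [Real.exp_one_lt_d9])) hr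
  refine ⟨one_div_pos.mpr (by positivity), ?_⟩
  rw [div_le_div_iff₀ (by positivity) (by norm_num)]; linarith

lemma one_add_pow_le_two {x : ℝ} (hx : 0 ≤ x) {d : ℕ} (hdx : d * x ≤ 1 / 2) :
    (1 + x) ^ d ≤ 2 := by
  calc (1 + x) ^ d ≤ Real.exp x ^ d := by
        gcongr; linarith [Real.add_one_le_exp x]
    _ = Real.exp (d * x) := (Real.exp_nat_mul x d).symm
    _ ≤ Real.exp (Real.log 2) := by
        gcongr; linarith [Real.log_two_gt_d9]
    _ = 2 := Real.exp_log two_pos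

lemma add_two_mul_four_div_pow_le {d : ℕ} {T P S δ : ℝ} (hT : 0 < T) (hP : 0 < P) (hS : 0 < S)
    (hTP : T ≤ 4 * δ * P) (hTS : 4 * d ≤ T * S) :
    ((T * S + 2) * (4 / P)) ^ d ≤ 2 ^ (4 * d + 1) * δ ^ d * S ^ d := by
  have hδ : 0 ≤ δ := by nlinarith
  have hfactor : (T * S + 2) * (4 / P) ≤ 16 * δ * S * (1 + 2 / (T * S)) := by
    calc (T * S + 2) * (4 / P) ≤ (T * S + 2) * (16 * δ / T) := by
          refine mul_le_mul_of_nonneg_left ?_ (by positivity)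
          rw [div_le_div_iff₀ hP hT]; linarith
      _ = 16 * δ * S * (1 + 2 / (T * S)) := by field_simp
  have hsmall : (1 + 2 / (T * S)) ^ d ≤ 2 := by
    apply one_add_pow_le_two (by positivity)
    rw [mul_div_assoc', div_le_iff₀ (by positivity)]; linarith
  calc ((T * S + 2) * (4 / P)) ^ d ≤ (16 * δ * S * (1 + 2 / (T * S))) ^ d := by gcongr
    _ = (16 * δ * S) ^ d * (1 + 2 / (T * S)) ^ d := mul_pow _ _ _
    _ ≤ (16 * δ * S) ^ d * 2 := by gcongr
    _ = 2 ^ (4 * d + 1) * δ ^ d * S ^ d := by rw [pow_succ, pow_mul]; ring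

lemma measure_inter_le_of_forall_cell {α κ : Type*} [MeasurableSpace α] {μ : Measure α}
    {B C : Set α} {c : ENNReal} (s : Finset κ) {Q : κ → Set α}
    (hdisj : (s : Set κ).PairwiseDisjoint Q) (hmeas : ∀ m ∈ s, MeasurableSet (Q m))
    (hsub : ∀ m ∈ s, Q m ⊆ C) (hnull : μ (C \ ⋃ m ∈ s, Q m) = 0)
    (hB : ∀ m ∈ s, μ (B ∩ Q m) ≤ c * μ (Q m)) : μ (B ∩ C) ≤ c * μ C := by
  have hcover : B ∩ C ⊆ (⋃ m ∈ s, B ∩ Q m) ∪ (C \ ⋃ m ∈ s, Q m) := by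
    rintro x ⟨hxB, hxC⟩
    by_cases hx : x ∈ ⋃ m ∈ s, Q m
    · obtain ⟨m, hm, hxQ⟩ := mem_iUnion₂.mp hx
      exact Or.inl (mem_iUnion₂.mpr ⟨m, hm, hxB, hxQ⟩)
    · exact Or.inr ⟨hxC, hx⟩
  calc μ (B ∩ C) ≤ μ (⋃ m ∈ s, B ∩ Q m) := measure_mono_ae <| by
        filter_upwards [measure_eq_zero_iff_ae_notMem.mp hnull] with x hx hxBC
        exact ((hcover hxBC).resolve_right hx)
    _ ≤ ∑ m ∈ s, μ (B ∩ Q m) := measure_biUnion_finset_le s _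
    _ ≤ ∑ m ∈ s, c * μ (Q m) := Finset.sum_le_sum hB
    _ = c * μ (⋃ m ∈ s, Q m) := by rw [← Finset.mul_sum, measure_biUnion_finset hdisj hmeas]
    _ ≤ c * μ C := by gcongr; exact iUnion₂_subset hsub

/-- The dyadic intervals of length at most `2 / P` meeting `[α, α + 1 / P]` start at one of the
three points `(⌊α P⌋ - 1 + n) / P`, `n < 3`, so they all lie in this interval of length `4 / P`. -/
def dyadicEnvelope (P α : ℝ) : Set ℝ := Ioo ((⌊α * P⌋ - 1) / P) ((⌊α * P⌋ + 3) / P)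

lemma volume_dyadicEnvelope {P : ℝ} (α : ℝ) :
    volume (dyadicEnvelope P α) = ENNReal.ofReal (4 / P) := by
  rw [dyadicEnvelope, Real.volume_Ioo, ← sub_div]; ring_nf

lemma Ioo_subset_dyadicEnvelope {P α y ε : ℝ} (hP : 0 < P) {b : ℤ} (hε : ε ≤ 2)
    (hy : y ∈ Ioo (b / P) ((b + ε) / P)) (hαy : α ≤ y) (hyα : y ≤ α + 1 / P) :
    Ioo (b / P) ((b + ε) / P) ⊆ dyadicEnvelope P α := by
  rw [mem_Ioo, div_lt_iff₀ hP, lt_div_iff₀ hP] at hy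
  have hlo : ⌊α * P⌋ - 1 ≤ b := by
    have : ⌊α * P⌋ < b + 2 := Int.floor_lt.mpr (by push_cast; nlinarith)
    omega
  have hhi : b ≤ ⌊α * P⌋ + 1 := by
    have : b - 1 ≤ ⌊α * P⌋ := Int.le_floor.mpr <| by
      have : y * P ≤ α * P + 1 := by
        calc y * P ≤ (α + 1 / P) * P := by gcongr
          _ = α * P + 1 := by field_simp
      push_cast; linarith
    omega
  have hlo' : (⌊α * P⌋ : ℝ) - 1 ≤ b := by exact_mod_cast hlo
  have hhi' : (b : ℝ) + ε ≤ ⌊α * P⌋ + 3 := by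
    have : (b : ℝ) ≤ ⌊α * P⌋ + 1 := by exact_mod_cast hhi
    linarith
  exact Ioo_subset_Ioo (by gcongr) (by gcongr)

lemma card_Ioo_floor_ceil_le (u : ℝ) {L : ℝ} (hL : 0 ≤ L) :
    ((Finset.Ioo ⌊u⌋ ⌈u + L⌉).card : ℝ) ≤ L + 1 := by
  rw [Int.card_Ioo, ← Int.cast_natCast, Int.toNat_eq_max, Int.cast_max]
  refine max_le ?_ (by simp; linarith)
  push_cast
  linarith [Int.ceil_lt_add_one (u + L), Int.sub_one_lt_floor u]

lemma volume_iUnion_dyadicEnvelope_inter_Ioo_le {P T δ : ℝ} (hP : 0 < P) (hT : 0 < T)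
    (hTP : T ≤ 4 * δ * P) (hδ : δ ≤ 1 / 20) (c : ℝ) {S : ℝ} (hS : 0 ≤ S) :
    volume ((⋃ a : ℤ, dyadicEnvelope P ((a - δ) / T)) ∩ Ioo c (c + S)) ≤
      ENNReal.ofReal ((T * S + 2) * (4 / P)) := by
  -- Only envelopes with `a ∈ (u, u + L)` meet `(c, c + S)`; there are at most `L + 1 ≤ T S + 2`.
  set u := T * c - 3 * T / P + δ
  set L := T * S + 5 * T / P
  have hTP' : 5 * T / P ≤ 1 := by rw [div_le_one hP]; nlinarith
  have hcover : (⋃ a : ℤ, dyadicEnvelope P ((a - δ) / T)) ∩ Ioo c (c + S) ⊆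
      ⋃ a ∈ Finset.Ioo ⌊u⌋ ⌈u + L⌉, dyadicEnvelope P ((a - δ) / T) := by
    rintro z ⟨hz, hzc⟩
    obtain ⟨a, hza⟩ := mem_iUnion.mp hz
    refine mem_iUnion₂.mpr ⟨a, Finset.mem_Ioo.mpr ⟨Int.floor_lt.mpr ?_, Int.lt_ceil.mpr ?_⟩, hza⟩
    all_goals
      rw [dyadicEnvelope, mem_Ioo, div_lt_iff₀ hP, lt_div_iff₀ hP] at hza
      rw [mem_Ioo] at hzc
      have hfl := Int.floor_le ((a - δ) / T * P)
      have hfl' := Int.lt_floor_add_one ((a - δ) / T * P)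
      have e : (a - δ) / T * P * T = (a - δ) * P := by field_simp
    · have h := mul_lt_mul_of_pos_right
        (show c * P < (a - δ) / T * P + 3 by nlinarith [hzc.1, hza.2]) hT
      rw [add_mul, e] at h
      have : T * c + δ - a < 3 * T / P := by rw [lt_div_iff₀ hP]; linarith
      linarith
    · have h := mul_lt_mul_of_pos_right
        (show (a - δ) / T * P < (c + S) * P + 2 by nlinarith [hzc.2, hza.1]) hT
      rw [e] at h
      have : a - δ - T * (c + S) < 2 * T / P := by rw [lt_div_iff₀ hP]; linarith
      have hL : u + L = T * (c + S) + 2 * T / P + δ := by simp only [u, L]; ring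
      linarith
  calc _ ≤ volume (⋃ a ∈ Finset.Ioo ⌊u⌋ ⌈u + L⌉, dyadicEnvelope P ((a - δ) / T)) :=
        measure_mono hcover
    _ ≤ ∑ a ∈ Finset.Ioo ⌊u⌋ ⌈u + L⌉, volume (dyadicEnvelope P ((a - δ) / T)) :=
        measure_biUnion_finset_le _ _
    _ = (Finset.Ioo ⌊u⌋ ⌈u + L⌉).card * ENNReal.ofReal (4 / P) := by
        simp only [volume_dyadicEnvelope, Finset.sum_const, nsmul_eq_mul]
    _ ≤ ENNReal.ofReal ((T * S + 2) * (4 / P)) := by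
        rw [ENNReal.ofReal_mul (by positivity), ← ENNReal.ofReal_natCast]
        gcongr
        linarith [card_Ioo_floor_ceil_le u (L := L) (by positivity)]

section Grid

variable {ι : Type*}

def gridCell (N : ℕ) (m : ι → ℤ) : Set (ι → ℝ) :=
  univ.pi fun k => Ioo ((m k : ℝ) / N) ((m k + 1) / N)

lemma pairwiseDisjoint_gridCell {N : ℕ} (hN : 0 < N) (s : Set (ι → ℤ)) :
    s.PairwiseDisjoint (gridCell N) := by
  intro m _ m' _ hmm'
  obtain ⟨k, hk⟩ := Function.ne_iff.mp hmm'
  refine disjoint_left.mpr fun x hx hx' => ?_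
  have h := hx k (mem_univ k)
  have h' := hx' k (mem_univ k)
  have hN' : (0 : ℝ) < N := by exact_mod_cast hN
  rcases lt_or_gt_of_ne hk with hlt | hlt
  · have : ((m k : ℝ) + 1) / N ≤ m' k / N := by gcongr; exact_mod_cast hlt
    linarith [h.2, h'.1]
  · have : ((m' k : ℝ) + 1) / N ≤ m k / N := by gcongr; exact_mod_cast hlt
    linarith [h.1, h'.2]

lemma gridCell_subset_pi_Ioo {N : ℕ} (hN : 0 < N) {m B B' : ι → ℤ}
    (hne : (gridCell N m ∩ univ.pi fun k => Ioo ((B k : ℝ) / N) (B' k / N)).Nonempty) :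
    gridCell N m ⊆ univ.pi fun k => Ioo ((B k : ℝ) / N) (B' k / N) := by
  obtain ⟨x, hxm, hxB⟩ := hne
  have hN' : (0 : ℝ) < N := by exact_mod_cast hN
  refine pi_mono fun k _ => ?_
  have h := hxm k (mem_univ k)
  have h' := hxB k (mem_univ k)
  have hB : B k ≤ m k := Int.lt_add_one_iff.mp <| by
    exact_mod_cast (div_lt_div_iff_of_pos_right hN').mp (h'.1.trans h.2)
  have hB' : m k + 1 ≤ B' k := Int.add_one_le_iff.mpr <| by
    exact_mod_cast (div_lt_div_iff_of_pos_right hN').mp (h.1.trans h'.2)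
  exact Ioo_subset_Ioo (div_le_div_of_nonneg_right (by exact_mod_cast hB) hN'.le)
    (div_le_div_of_nonneg_right (by exact_mod_cast hB') hN'.le)

def dyadicCover (P : ℝ) (U : Set (ι → ℝ)) : Set (ι → ℝ) :=
  ⋃ (b : ι → ℤ) (ε : ι → ℕ) (_ : ∀ k, ε k = 1 ∨ ε k = 2)
    (_ : ((univ.pi fun k => Ioo ((b k : ℝ) / P) (((b k : ℝ) + ε k) / P)) ∩ U).Nonempty),
    univ.pi fun k => Ioo ((b k : ℝ) / P) (((b k : ℝ) + ε k) / P)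

lemma gridCell_subset_dyadicCover {N p : ℕ} (hN : 0 < N) (hp : p ∣ N) {U : Set (ι → ℝ)}
    {m : ι → ℤ} (hne : (gridCell N m ∩ dyadicCover p U).Nonempty) :
    gridCell N m ⊆ dyadicCover p U := by
  obtain ⟨q, rfl⟩ := hp
  obtain ⟨x, hxm, hx⟩ := hne
  simp only [dyadicCover, mem_iUnion] at hx
  obtain ⟨b, ε, hε, hbU, hxb⟩ := hx
  have hp : (p : ℝ) ≠ 0 := by exact_mod_cast (Nat.pos_of_mul_pos_right hN).ne'
  have hq : (q : ℝ) ≠ 0 := by exact_mod_cast (Nat.pos_of_mul_pos_left hN).ne'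
  have hbox : (univ.pi fun k => Ioo ((b k : ℝ) / p) (((b k : ℝ) + ε k) / p)) =
      univ.pi fun k => Ioo (((b k * q : ℤ) : ℝ) / ↑(p * q)) (((b k + ε k) * q : ℤ) / ↑(p * q)) := by
    congr! 3 with k <;> push_cast <;> field_simp
  rw [hbox] at hxb
  have hcell := gridCell_subset_pi_Ioo hN ⟨x, hxm, hxb⟩
  rw [← hbox] at hcell
  exact hcell.trans (subset_iUnion₂_of_subset b ε (subset_iUnion₂_of_subset hε hbU subset_rfl))

lemma dyadicCover_subset_pi_dyadicEnvelope {P T δ : ℝ} (hP : 0 < P) (hT : 0 < T)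
    (hδP : 2 * δ * P ≤ T) {U : Set (ι → ℝ)}
    (hU : ∀ x ∈ U, ∀ k, ∃ a : ℤ, |x k - a / T| ≤ δ / T) :
    dyadicCover P U ⊆ univ.pi fun _ => ⋃ a : ℤ, dyadicEnvelope P ((a - δ) / T) := by
  intro x hx k _
  simp only [dyadicCover, mem_iUnion] at hx
  obtain ⟨b, ε, hε, ⟨y, hyb, hyU⟩, hxb⟩ := hx
  obtain ⟨a, ha⟩ := hU y hyU k
  rw [abs_le] at ha
  refine mem_iUnion.mpr ⟨a, Ioo_subset_dyadicEnvelope hP ?_ (hyb k (mem_univ k)) ?_ ?_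
    (hxb k (mem_univ k))⟩
  · rcases hε k with h | h <;> simp [h]
  · rw [sub_div]; linarith
  · have : 2 * (δ / T) ≤ 1 / P := by rw [← mul_div_assoc, div_le_div_iff₀ hT hP]; linarith
    rw [sub_div]; linarith

variable [Fintype ι]

lemma measurableSet_gridCell (N : ℕ) (m : ι → ℤ) : MeasurableSet (gridCell N m) :=
  MeasurableSet.univ_pi fun _ => measurableSet_Ioo

lemma volume_gridCell (N : ℕ) (m : ι → ℤ) :
    volume (gridCell N m) = ENNReal.ofReal (1 / N) ^ Fintype.card ι := by
  simp only [gridCell, volume_pi_pi, Real.volume_Ioo, ← sub_div, add_sub_cancel_left,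
    Finset.prod_const, Finset.card_univ]

lemma volume_dyadicCover_inter_gridCell_le_pow {P T δ : ℝ} (hP : 0 < P) (hT : 0 < T)
    (hδP : 2 * δ * P ≤ T) (hTP : T ≤ 4 * δ * P) (hδ : δ ≤ 1 / 20) {U : Set (ι → ℝ)}
    (hU : ∀ x ∈ U, ∀ k, ∃ a : ℤ, |x k - a / T| ≤ δ / T) (N : ℕ) (m : ι → ℤ) :
    volume (dyadicCover P U ∩ gridCell N m) ≤
      ENNReal.ofReal ((T * (1 / N) + 2) * (4 / P)) ^ Fintype.card ι := by
  calc volume (dyadicCover P U ∩ gridCell N m)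
      ≤ volume (univ.pi fun k => (⋃ a : ℤ, dyadicEnvelope P ((a - δ) / T)) ∩
          Ioo ((m k : ℝ) / N) (m k / N + 1 / N)) := by
        refine measure_mono fun x hx k _ =>
          ⟨dyadicCover_subset_pi_dyadicEnvelope hP hT hδP hU hx.1 k (mem_univ k), ?_⟩
        rw [← add_div]; exact hx.2 k (mem_univ k)
    _ = ∏ k, volume ((⋃ a : ℤ, dyadicEnvelope P ((a - δ) / T)) ∩
          Ioo ((m k : ℝ) / N) (m k / N + 1 / N)) := volume_pi_pi _
    _ ≤ ∏ _k : ι, ENNReal.ofReal ((T * (1 / N) + 2) * (4 / P)) := Finset.prod_le_prod' fun k _ =>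
        volume_iUnion_dyadicEnvelope_inter_Ioo_le hP hT hTP hδ _ (by positivity)
    _ = _ := by rw [Finset.prod_const, Finset.card_univ]

lemma volume_dyadicCover_inter_gridCell_le {N : ℕ} (hN : 0 < N) {P T δ : ℝ} (hP : 0 < P)
    (hT : 0 < T) (hδP : 2 * δ * P ≤ T) (hTP : T ≤ 4 * δ * P) (hδ : δ ≤ 1 / 20)
    (hTN : 4 * Fintype.card ι ≤ T / N) {U : Set (ι → ℝ)}
    (hU : ∀ x ∈ U, ∀ k, ∃ a : ℤ, |x k - a / T| ≤ δ / T) (m : ι → ℤ) :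
    volume (dyadicCover P U ∩ gridCell N m) ≤
      ENNReal.ofReal (2 ^ (4 * Fintype.card ι + 1) * δ ^ Fintype.card ι) *
        volume (gridCell N m) := by
  have hN' : (0 : ℝ) < N := by exact_mod_cast hN
  have hδ0 : 0 ≤ δ := by nlinarith
  refine (volume_dyadicCover_inter_gridCell_le_pow hP hT hδP hTP hδ hU N m).trans ?_
  rw [volume_gridCell, ← ENNReal.ofReal_pow (by positivity), ← ENNReal.ofReal_pow (by positivity),
    ← ENNReal.ofReal_mul (by positivity)]
  exact ENNReal.ofReal_le_ofReal <|
    add_two_mul_four_div_pow_le hT hP (by positivity) hTP (by rwa [mul_one_div])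

variable [DecidableEq ι]

lemma gridCell_subset_cube {N : ℕ} {m : ι → ℤ}
    (hm : m ∈ Fintype.piFinset fun _ => Finset.Ico (0 : ℤ) N) :
    gridCell N m ⊆ univ.pi fun _ => Icc (0 : ℝ) 1 := by
  refine pi_mono fun k _ => Ioo_subset_Icc_self.trans (Icc_subset_Icc ?_ ?_)
  all_goals obtain ⟨hm0, hmN⟩ := Finset.mem_Ico.mp (Fintype.mem_piFinset.mp hm k)
  · have : (0 : ℝ) ≤ m k := by exact_mod_cast hm0
    positivity
  · have : (m k : ℝ) + 1 ≤ N := by exact_mod_cast hmN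
    exact div_le_one_of_le₀ this (Nat.cast_nonneg N)

/-- Off the hyperplanes `x k ∈ ℤ / N`, every point of the cube lies in an open grid cell. -/
lemma volume_cube_diff_iUnion_gridCell {N : ℕ} (hN : 0 < N) :
    volume ((univ.pi fun _ : ι => Icc (0 : ℝ) 1) \
      ⋃ m ∈ Fintype.piFinset (fun _ : ι => Finset.Ico (0 : ℤ) N), gridCell N m) = 0 := by
  have hN' : (0 : ℝ) < N := by exact_mod_cast hN
  refine measure_mono_null (t := ⋃ (k : ι) (p : ℤ), {x | x k = p / N}) ?_
    (measure_iUnion_null fun k => measure_iUnion_null fun p =>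
      Measure.pi_hyperplane (fun _ => volume) k _)
  rintro x ⟨hx, hxm⟩
  by_contra hxp
  simp only [mem_iUnion, mem_ofPred_eq, not_exists] at hxp
  refine hxm (mem_iUnion₂.mpr ⟨fun k => ⌊x k * N⌋, Fintype.mem_piFinset.mpr fun k => ?_,
    fun k _ => ?_⟩)
  all_goals
    obtain ⟨hx0, hx1⟩ := hx k (mem_univ k)
    have hfl : (⌊x k * N⌋ : ℝ) < x k * N := (Int.floor_le _).lt_of_ne fun h =>
      hxp k ⌊x k * N⌋ (by rw [h, mul_div_cancel_right₀ _ hN'.ne'])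
  · refine Finset.mem_Ico.mpr ⟨Int.floor_nonneg.mpr (by positivity), Int.floor_lt.mpr ?_⟩
    refine (mul_le_of_le_one_left hN'.le hx1).lt_of_ne fun h => hxp k N ?_
    rw [Int.cast_natCast, div_self hN'.ne']
    exact (mul_eq_right₀ hN'.ne').mp h
  · simp only [mem_Ioo, div_lt_iff₀ hN', lt_div_iff₀ hN']
    exact ⟨hfl, Int.lt_floor_add_one _⟩

lemma volume_inter_biInter_cube_diff_le {κ : Type*} {N : ℕ} (hN : 0 < N) {s : Finset κ}
    (hs : s.Nonempty) {A : κ → Set (ι → ℝ)}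
    (hA : ∀ j ∈ s, ∀ m, (gridCell N m ∩ A j).Nonempty → gridCell N m ⊆ A j)
    {B : Set (ι → ℝ)} {c : ENNReal}
    (hB : ∀ m, volume (B ∩ gridCell N m) ≤ c * volume (gridCell N m)) :
    volume (B ∩ ⋂ j ∈ s, (univ.pi fun _ => Icc (0 : ℝ) 1) \ A j) ≤
      c * volume (⋂ j ∈ s, (univ.pi fun _ => Icc (0 : ℝ) 1) \ A j) := by
  classical
  set C := ⋂ j ∈ s, (univ.pi fun _ => Icc (0 : ℝ) 1) \ A j
  set G := Fintype.piFinset fun _ : ι => Finset.Ico (0 : ℤ) N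
  have hcell : ∀ m ∈ G, ∀ x ∈ C, x ∈ gridCell N m → gridCell N m ⊆ C := fun m hm x hxC hxm =>
    subset_iInter₂ fun j hj => subset_sdiff.mpr ⟨gridCell_subset_cube hm,
      disjoint_left.mpr fun y hy hyA => (mem_iInter₂.mp hxC j hj).2 (hA j hj m ⟨y, hy, hyA⟩ hxm)⟩
  refine measure_inter_le_of_forall_cell (G.filter fun m => gridCell N m ⊆ C)
    (pairwiseDisjoint_gridCell hN _) (fun m _ => measurableSet_gridCell N m)
    (fun m hm => (Finset.mem_filter.mp hm).2) ?_ (fun m _ => hB m)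
  refine measure_mono_null ?_ (volume_cube_diff_iUnion_gridCell hN)
  rintro x ⟨hxC, hx⟩
  obtain ⟨j, hj⟩ := hs
  refine ⟨(mem_iInter₂.mp hxC j hj).1, fun hxG => hx ?_⟩
  obtain ⟨m, hm, hxm⟩ := mem_iUnion₂.mp hxG
  exact mem_iUnion₂.mpr ⟨m, Finset.mem_filter.mpr ⟨hm, hcell m hm x hxC hxm⟩, hxm⟩

end Grid

theorem principal_lemma_general (d : ℕ) (hd : 1 ≤ d) (M : ℝ) (hM : 8 ≤ M)
    (t : ℕ → ℝ) (hpos : ∀ j, 1 ≤ j → 0 < t j) (ht1 : 2 ≤ t 1)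
    (hlac : ∀ j, 1 ≤ j → 1 + 1 / M ≤ t (j + 1) / t j)
    (δ δ₁ : ℝ) (hδ : δ = 1 / (2 ^ 11 * (M * Real.log M) ^ ((1 : ℝ) / d)))
    (hδ₁ : δ₁ = 2 ^ (4 * d + 1) * δ ^ d)
    (h : ℕ) (hh : h = ⌈2 ^ (3 * d) * M * Real.log M⌉₊)
    (l : ℕ → ℤ) (hl : ∀ j, l j = ⌊Real.logb 2 (t j / (2 * δ))⌋)
    (E : ℕ → (Fin d → ℤ) → Set (Fin d → ℝ))
    (hE : ∀ j a, E j a =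
      {x : Fin d → ℝ | ∀ k, x k ∈ Set.Icc (0 : ℝ) 1 ∧ |x k - (a k : ℝ) / t j| ≤ δ / t j})
    (Eun : ℕ → Set (Fin d → ℝ))
    (hEun : ∀ j, Eun j = ⋃ a ∈ {a : Fin d → ℤ | ∀ k, a k ∈ Set.Icc (0 : ℤ) ⌈t j⌉}, E j a)
    (A : ℕ → Set (Fin d → ℝ))
    (hA : ∀ j, A j = ⋃ (b : Fin d → ℤ) (ε : Fin d → ℕ) (_ : ∀ k, ε k = 1 ∨ ε k = 2)
      (_ : ((Set.univ.pi fun k => Set.Ioo ((b k : ℝ) / 2 ^ l j)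
              (((b k : ℝ) + ε k) / 2 ^ l j)) ∩ Eun j).Nonempty),
        Set.univ.pi fun k => Set.Ioo ((b k : ℝ) / 2 ^ l j) (((b k : ℝ) + ε k) / 2 ^ l j))
    (C : ℕ → Set (Fin d → ℝ))
    (hC : ∀ i, C i = ⋂ j ∈ Finset.Icc 1 i,
      (Set.univ.pi fun _ : Fin d => Set.Icc (0 : ℝ) 1) \ A j)
    (i : ℕ) (hi : 1 ≤ i) :
    volume (A (i + h) ∩ C i) ≤ ENNReal.ofReal δ₁ * volume (C i) := by
  have hA' : ∀ j, A j = dyadicCover (2 ^ l j) (Eun j) := hA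
  obtain ⟨hδ0, hδ20⟩ := hδ ▸ one_div_two_pow_mul_rpow_mem_Ioc hM (r := 1 / d) (by positivity)
  have hmono : MonotoneOn t (Ici 1) :=
    monotoneOn_of_one_le_ratio (by simp; positivity) hpos hlac
  have hscale : ∀ j, 1 ≤ j → t j ∈ Icc (2 * δ * 2 ^ l j) (4 * δ * 2 ^ l j) := fun j hj =>
    hl j ▸ mem_Icc_mul_zpow_floor_logb (hpos j hj) hδ0
  have hnat : ∀ j ∈ Finset.Icc 1 i,
      (2 : ℝ) ^ l j = (2 ^ (l j).toNat : ℕ) ∧ 2 ^ (l j).toNat ∣ 2 ^ (l i).toNat := by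
    intro j hj
    obtain ⟨hj1, hji⟩ := Finset.mem_Icc.mp hj
    rw [hl, hl]
    refine zpow_floor_logb_eq_natCast_and_dvd ((one_le_div (by positivity)).mpr ?_)
      (by gcongr; exact hmono hj1 (hj1.trans hji) hji)
    linarith [hmono (mem_Ici.mpr le_rfl) hj1 hj1]
  set N := 2 ^ (l i).toNat
  have hU : ∀ x ∈ Eun (i + h), ∀ k, ∃ a : ℤ, |x k - a / t (i + h)| ≤ δ / t (i + h) := by
    intro x hx k
    simp only [hEun, hE, mem_iUnion] at hx
    obtain ⟨a, -, hxa⟩ := hx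
    exact ⟨a k, (hxa k).2⟩
  have hTN : 4 * Fintype.card (Fin d) ≤ t (i + h) / N := by
    rw [Fintype.card_fin]
    refine four_mul_le_div_of_ratio_le hd hM hpos hlac hδ (hh ▸ Nat.le_ceil _) hi (by positivity) ?_
    rw [← (hnat i (by simp [hi])).1]; exact (hscale i hi).1
  rw [hC i]
  refine volume_inter_biInter_cube_diff_le (N := N) (by positivity) ⟨i, by simp [hi]⟩
    (fun j hj m hne => ?_) (fun m => ?_)
  · rw [hA' j, (hnat j hj).1] at hne ⊢
    exact gridCell_subset_dyadicCover (by positivity) (hnat j hj).2 hne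
  · have := volume_dyadicCover_inter_gridCell_le (by positivity) (by positivity)
      (hpos _ (by omega)) (hscale _ (by omega)).1 (hscale _ (by omega)).2 hδ20 hTN hU m
    rwa [Fintype.card_fin, ← hδ₁, ← hA'] at this

/-- Principal Lemma (Lemma 1): with `A j` the union of the open dyadic boxes at
scale `2^(-l j)` (side lengths `2^(-l j)` or `2^(1 - l j)`) meeting the union of
the boxes `E(j, a)`, if `μ(⋂_{j ≤ i} A j ᶜ) ≠ 0` then
`μ(A (i+h) ∩ ⋂_{j ≤ i} A j ᶜ) ≤ δ₁ μ(⋂_{j ≤ i} A j ᶜ)`. -/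
theorem principal_lemma (d : ℕ) (hd : 1 ≤ d) (M : ℝ) (hM : 8 ≤ M)
    (t : ℕ → ℝ) (hpos : ∀ j, 1 ≤ j → 0 < t j) (ht1 : 2 ≤ t 1)
    (hlac : ∀ j, 1 ≤ j → 1 + 1 / M ≤ t (j + 1) / t j)
    (δ δ₁ : ℝ) (hδ : δ = 1 / (2 ^ 11 * (M * Real.log M) ^ ((1 : ℝ) / d)))
    (hδ₁ : δ₁ = 2 ^ (4 * d + 1) * δ ^ d)
    (h : ℕ) (hh : h = ⌈2 ^ (3 * d) * M * Real.log M⌉₊)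
    (l : ℕ → ℤ) (hl : ∀ j, l j = ⌊Real.logb 2 (t j / (2 * δ))⌋)
    (E : ℕ → (Fin d → ℤ) → Set (Fin d → ℝ))
    (hE : ∀ j a, E j a =
      {x : Fin d → ℝ | ∀ k, x k ∈ Set.Icc (0 : ℝ) 1 ∧ |x k - (a k : ℝ) / t j| ≤ δ / t j})
    (Eun : ℕ → Set (Fin d → ℝ))
    (hEun : ∀ j, Eun j = ⋃ a ∈ {a : Fin d → ℤ | ∀ k, a k ∈ Set.Icc (0 : ℤ) ⌈t j⌉}, E j a)
    (A : ℕ → Set (Fin d → ℝ))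
    (hA : ∀ j, A j = ⋃ (b : Fin d → ℤ) (ε : Fin d → ℕ) (_ : ∀ k, ε k = 1 ∨ ε k = 2)
      (_ : ((Set.univ.pi fun k => Set.Ioo ((b k : ℝ) / 2 ^ l j)
              (((b k : ℝ) + ε k) / 2 ^ l j)) ∩ Eun j).Nonempty),
        Set.univ.pi fun k => Set.Ioo ((b k : ℝ) / 2 ^ l j) (((b k : ℝ) + ε k) / 2 ^ l j))
    (C : ℕ → Set (Fin d → ℝ))
    (hC : ∀ i, C i = ⋂ j ∈ Finset.Icc 1 i,
      (Set.univ.pi fun _ : Fin d => Set.Icc (0 : ℝ) 1) \ A j)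
    (i : ℕ) (hi : 1 ≤ i) (hne : volume (C i) ≠ 0) :
    volume (A (i + h) ∩ C i) ≤ ENNReal.ofReal δ₁ * volume (C i) :=
  principal_lemma_general d hd M hM t hpos ht1 hlac δ δ₁ hδ hδ₁ h hh l hl E hE Eun hEun A hA C hC i
    hi
end

section
/- If the statement of Theorem 2 holds for all lacunary ratios with $M \ge 8$ (i.e., for $|\theta| \ge$ some threshold), then for every complex $\theta$ with $1 < |\theta| \le 8$ there exists $\xi \in \mathbb{C}$ and a constant $c > 0$ depending only on $|\theta|$ through $\frac{|\theta|-1}{\log(2 + 1/(|\theta|-1))}$ such that $\|\theta^j \xi\| \ge c$ for all $j \ge 1$. -/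
/-- Key numeric inequality. -/
lemma aux_ineq (ε : ℝ) (hε : 0 < ε) (hε7 : ε ≤ 7) :
    Real.sqrt (ε / Real.log (2 + 1/ε)) / 2^20 ≤
      1 / (2 ^ 13 * 2 * (max 8 (1/ε) * Real.log (max 8 (1/ε))) ^ ((1 : ℝ) / 2)) := by
  set M : ℝ := max 8 (1/ε) with hM
  set L : ℝ := Real.log (2 + 1/ε) with hL
  have hεinv : 0 < 1/ε := by positivity
  have hLpos : 0 < L := Real.log_pos (by linarith)
  have hM8 : (8:ℝ) ≤ M := le_max_left _ _
  have hMpos : (0:ℝ) < M := by linarith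
  have hlogMpos : 0 < Real.log M := Real.log_pos (by linarith)
  have hMle : M ≤ (2 + 1/ε)^6 := by
    apply max_le
    · calc (8:ℝ) ≤ 2^6 := by norm_num
        _ ≤ (2 + 1/ε)^6 := by apply pow_le_pow_left₀ (by norm_num); linarith
    · calc 1/ε ≤ 2 + 1/ε := by linarith
        _ ≤ (2 + 1/ε)^6 := le_self_pow₀ (by linarith) (by norm_num)
  have hlogM : Real.log M ≤ 6 * L := by
    calc Real.log M ≤ Real.log ((2 + 1/ε)^6) := Real.log_le_log hMpos hMle
      _ = 6 * L := by rw [Real.log_pow]; push_cast; ring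
  have hM56 : M ≤ 56 / ε := by
    apply max_le
    · rw [le_div_iff₀ hε]; linarith
    · rw [div_le_div_iff₀ hε hε]; nlinarith
  have hprod : (ε / L) * (M * Real.log M) ≤ 336 := by
    have h1 : M * Real.log M ≤ (56/ε) * (6*L) :=
      mul_le_mul hM56 hlogM hlogMpos.le (by positivity)
    have h2 : (ε / L) * (M * Real.log M) ≤ (ε / L) * ((56/ε) * (6*L)) :=
      mul_le_mul_of_nonneg_left h1 (by positivity)
    have h3 : (ε / L) * ((56/ε) * (6*L)) = 336 := by field_simp; ring
    linarith [h2, h3.le]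
  rw [← Real.rpow_natCast (2 + 1/ε) 6] at hMle
  -- convert rpow to sqrt
  have hMlogM : 0 ≤ M * Real.log M := by positivity
  rw [show ((M * Real.log M) ^ ((1:ℝ)/2)) = Real.sqrt (M * Real.log M) from
    (Real.sqrt_eq_rpow _).symm]
  have hu : 0 ≤ ε / L := by positivity
  rw [div_le_div_iff₀ (by norm_num) (by positivity), one_mul]
  have key : Real.sqrt (ε / L) * Real.sqrt (M * Real.log M) ≤ 64 := by
    rw [← Real.sqrt_mul hu]
    calc Real.sqrt (ε / L * (M * Real.log M)) ≤ Real.sqrt 4096 :=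
          Real.sqrt_le_sqrt (by linarith)
      _ = 64 := by
          rw [show (4096:ℝ) = 64^2 by norm_num, Real.sqrt_sq (by norm_num)]
  nlinarith [Real.sqrt_nonneg (ε / L), Real.sqrt_nonneg (M * Real.log M)]

/-- Reduction of the case `1 < |θ| ≤ 8` to the case `|θ| > 8`: if Theorem 2
(the orthogonal Peres–Schlag theorem in dimension 2) holds for all lacunary
ratios with `M ≥ 8`, then for every complex `θ` with `1 < |θ| ≤ 8` there exist
`ξ ∈ ℂ` and a constant `c > 0` depending on `|θ|` only through
`(|θ|-1)/log(2 + 1/(|θ|-1))` such that the sup-norm distance of `θ^j ξ` to the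
Gaussian integers is at least `c` for all `j ≥ 1`. -/
theorem reduction_small_theta
    (thm2 : ∀ (M : ℝ), 8 ≤ M → ∀ t : ℕ → ℝ, (∀ j, 1 ≤ j → 0 < t j) → 2 ≤ t 1 →
      (∀ j, 1 ≤ j → 1 + 1 / M ≤ t (j + 1) / t j) →
      ∀ S : ℕ → Matrix (Fin 2) (Fin 2) ℝ, (∀ j, (S j).transpose * S j = 1) →
      ∃ α : Fin 2 → ℝ, ∀ j, 1 ≤ j → ∃ k : Fin 2, ∀ a : ℤ,
        1 / (2 ^ 13 * 2 * (M * Real.log M) ^ ((1 : ℝ) / 2)) ≤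
          |((t j • S j).mulVec α) k - (a : ℝ)|) :
    ∃ c : ℝ → ℝ, (∀ u, 0 < u → 0 < c u) ∧
      ∀ θ : ℂ, 1 < ‖θ‖ → ‖θ‖ ≤ 8 →
        ∃ ξ : ℂ, ∀ j : ℕ, 1 ≤ j →
          (∀ a : ℤ, c ((‖θ‖ - 1) / Real.log (2 + 1 / (‖θ‖ - 1)))
              ≤ |(θ ^ j * ξ).re - (a : ℝ)|) ∨
          (∀ b : ℤ, c ((‖θ‖ - 1) / Real.log (2 + 1 / (‖θ‖ - 1)))
              ≤ |(θ ^ j * ξ).im - (b : ℝ)|) := by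
  refine ⟨fun u => Real.sqrt u / 2^20, fun u hu => by positivity, ?_⟩
  intro θ h1 h8
  set r : ℝ := ‖θ‖ with hr
  have hr0 : 0 < r := by linarith
  have hrne : r ≠ 0 := hr0.ne'
  have hε : 0 < r - 1 := by linarith
  have hε7 : r - 1 ≤ 7 := by linarith
  set M : ℝ := max 8 (1/(r-1)) with hM
  have hM8 : (8:ℝ) ≤ M := le_max_left _ _
  set t : ℕ → ℝ := fun j => 2 * r ^ j / r with ht
  have htpos : ∀ j, 1 ≤ j → 0 < t j := fun j _ => by positivity
  have ht1 : 2 ≤ t 1 := by simp [ht]; rw [mul_div_assoc, div_self hrne, mul_one]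
  have htratio : ∀ j, 1 ≤ j → 1 + 1 / M ≤ t (j + 1) / t j := by
    intro j hj
    have heq : t (j+1) / t j = r := by
      show 2 * r ^ (j+1) / r / (2 * r ^ j / r) = r
      field_simp [pow_succ]
      ring
    rw [heq]
    have : 1 / M ≤ r - 1 := by
      rw [div_le_iff₀ (by linarith : (0:ℝ) < M)]
      have h1ε : 1/(r-1) ≤ M := le_max_right _ _
      rw [div_le_iff₀ hε] at h1ε
      linarith
    linarith
  set S : ℕ → Matrix (Fin 2) (Fin 2) ℝ := fun j =>
    !![(θ^j).re / r^j, -(θ^j).im / r^j; (θ^j).im / r^j, (θ^j).re / r^j] with hS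
  have hkey : ∀ j : ℕ, (θ^j).re * (θ^j).re + (θ^j).im * (θ^j).im = r^j * r^j := by
    intro j
    have h := Complex.sq_norm (θ^j)
    rw [Complex.normSq_apply] at h
    rw [norm_pow] at h
    rw [← hr] at h
    nlinarith [h]
  have hSorth : ∀ j, (S j).transpose * S j = 1 := by
    intro j
    have hrj : (r:ℝ)^j ≠ 0 := by positivity
    ext i k
    fin_cases i <;> fin_cases k <;>
      simp [hS, Matrix.mul_apply, Fin.sum_univ_two, Matrix.one_apply,
        Matrix.transpose_apply, Matrix.cons_val_zero, Matrix.cons_val_one,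
        Matrix.head_cons, Matrix.head_fin_const, Matrix.vecHead, Matrix.vecTail] <;>
      field_simp <;> nlinarith [hkey j]
  obtain ⟨α, hα⟩ := thm2 M hM8 t htpos ht1 htratio S hSorth
  refine ⟨⟨2/r * α 0, 2/r * α 1⟩, ?_⟩
  intro j hj
  obtain ⟨k, hk⟩ := hα j hj
  have hbound : Real.sqrt ((r - 1) / Real.log (2 + 1/(r-1))) / 2^20 ≤
      1 / (2 ^ 13 * 2 * (M * Real.log M) ^ ((1 : ℝ) / 2)) := aux_ineq (r-1) hε hε7
  have hre : ((t j • S j).mulVec α) 0 = (θ^j * ⟨2/r * α 0, 2/r * α 1⟩).re := by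
    simp [Matrix.mulVec, dotProduct, Fin.sum_univ_two, hS, ht,
      Complex.mul_re]
    field_simp
    ring
  have him : ((t j • S j).mulVec α) 1 = (θ^j * ⟨2/r * α 0, 2/r * α 1⟩).im := by
    simp [Matrix.mulVec, dotProduct, Fin.sum_univ_two, hS, ht,
      Complex.mul_im]
    field_simp
    ring
  fin_cases k
  · left
    intro a
    calc Real.sqrt ((r - 1) / Real.log (2 + 1/(r-1))) / 2^20
        ≤ 1 / (2 ^ 13 * 2 * (M * Real.log M) ^ ((1 : ℝ) / 2)) := hbound
      _ ≤ |((t j • S j).mulVec α) 0 - (a : ℝ)| := hk a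
      _ = |(θ^j * ⟨2/r * α 0, 2/r * α 1⟩).re - (a : ℝ)| := by rw [hre]
  · right
    intro b
    calc Real.sqrt ((r - 1) / Real.log (2 + 1/(r-1))) / 2^20
        ≤ 1 / (2 ^ 13 * 2 * (M * Real.log M) ^ ((1 : ℝ) / 2)) := hbound
      _ ≤ |((t j • S j).mulVec α) 1 - (b : ℝ)| := hk b
      _ = |(θ^j * ⟨2/r * α 0, 2/r * α 1⟩).im - (b : ℝ)| := by rw [him]
end
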